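/- arXiv:1611.01655 — 3 statements merged into one kernel-verified Lean document; each statement's English description precedes it below -/
import Mathlib

section
/- There exists a constant C > 0 such that for every integer m ≥ 0, setting n = 5·2^m, every set Q of subsets of X_n satisfying c_Q(μ) = Opt(μ) for all probability distributions μ on X_n has cardinality at least 1.25^n / (C·√n); that is, u_Opt(n,0) ≥ 1.25^n / (C·√n) for all n of the form 5·2^m. -/
namespace TQ

/-- A decision tree: internal nodes are labeled by questions (subsets of `α`,
with the two children corresponding to Yes/No), leaves by elements of `α`. -/
inductive DTree (α : Type) where
  | leaf (x : α) : DTree α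
  | node (q : Finset α) (yes no : DTree α) : DTree α

namespace DTree

variable {α : Type} [DecidableEq α]

/-- The list of leaf labels of a decision tree. -/
def leaves : DTree α → List α
  | .leaf x => [x]
  | .node _ t f => leaves t ++ leaves f

/-- The set of questions appearing at internal nodes. -/
def questions : DTree α → Set (Finset α)
  | .leaf _ => ∅
  | .node q t f => insert q (questions t ∪ questions f)

/-- Follow the path of `x` (Yes-edge iff `x` belongs to the question);
returns `some d` iff the path ends at a leaf labeled `x`, at depth `d`. -/
def find? : DTree α → α → Option ℕ
  | .leaf y, x => if y = x then some 0 else none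
  | .node q t f, x => (if x ∈ q then find? t x else find? f x).map (· + 1)

/-- The depth of the leaf labeled `x` (junk value `0` if the path of `x`
does not end at a leaf labeled `x`). -/
def depth (T : DTree α) (x : α) : ℕ := (T.find? x).getD 0

end DTree

variable {α : Type} [Fintype α] [DecidableEq α]

/-- `μ` is a probability distribution on `α`. -/
def IsDistribution (μ : α → ℝ) : Prop := (∀ x, 0 ≤ μ x) ∧ ∑ x, μ x = 1

/-- `T` is valid for `μ`: its leaves are distinct, the set of leaf labels is the
support of `μ`, and for every `x` in the support the path of `x` ends at the
leaf labeled `x`. -/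
structure IsValid (T : DTree α) (μ : α → ℝ) : Prop where
  nodup : T.leaves.Nodup
  mem_leaves : ∀ x, x ∈ T.leaves ↔ μ x ≠ 0
  finds : ∀ x, μ x ≠ 0 → T.find? x = some (T.depth x)

/-- The cost of `T` on `μ`: the average depth `∑ x, μ(x) · T(x)`. -/
noncomputable def cost (T : DTree α) (μ : α → ℝ) : ℝ := ∑ x, μ x * (T.depth x : ℝ)

/-- All questions of `T` belong to `Q`. -/
def UsesQuestions (T : DTree α) (Q : Set (Finset α)) : Prop := T.questions ⊆ Q

/-- `Opt(μ)`: the optimal cost over all decision trees valid for `μ`. -/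
noncomputable def OptCost (μ : α → ℝ) : ℝ :=
  sInf { c | ∃ T : DTree α, IsValid T μ ∧ c = cost T μ }

/-- `c_Q(μ)`: the optimal cost over decision trees valid for `μ`
using only questions from `Q`. -/
noncomputable def cQ (Q : Set (Finset α)) (μ : α → ℝ) : ℝ :=
  sInf { c | ∃ T : DTree α, IsValid T μ ∧ UsesQuestions T Q ∧ c = cost T μ }

/-- The base-2 (Shannon) entropy of `μ`. (Note `Real.logb 2 0 = 0`.) -/
noncomputable def entropy (μ : α → ℝ) : ℝ := ∑ x, -(μ x * Real.logb 2 (μ x))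

/-- `Q` achieves prolixity `r`: for every distribution there is a valid tree using
only questions from `Q` of cost at most `Opt(μ) + r`. -/
def AchievesProlixity {n : ℕ} (Q : Finset (Finset (Fin n))) (r : ℝ) : Prop :=
  ∀ μ : Fin n → ℝ, IsDistribution μ →
    ∃ T : DTree (Fin n), IsValid T μ ∧ UsesQuestions T ↑Q ∧ cost T μ ≤ OptCost μ + r

/-- `Q` achieves redundancy `r`: for every distribution there is a valid tree using
only questions from `Q` of cost at most `H(μ) + r`. -/
def AchievesRedundancy {n : ℕ} (Q : Finset (Finset (Fin n))) (r : ℝ) : Prop :=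
  ∀ μ : Fin n → ℝ, IsDistribution μ →
    ∃ T : DTree (Fin n), IsValid T μ ∧ UsesQuestions T ↑Q ∧ cost T μ ≤ entropy μ + r

/-- `u_Opt(n,r)`: the minimum cardinality of a set of questions achieving prolixity `r`. -/
noncomputable def uOpt (n : ℕ) (r : ℝ) : ℕ :=
  sInf { k | ∃ Q : Finset (Finset (Fin n)), Q.card = k ∧ AchievesProlixity Q r }

/-- `u_H(n,r)`: the minimum cardinality of a set of questions achieving redundancy `r`. -/
noncomputable def uH (n : ℕ) (r : ℝ) : ℕ :=
  sInf { k | ∃ Q : Finset (Finset (Fin n)), Q.card = k ∧ AchievesRedundancy Q r }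

end TQ

/-!
Let `N = 2 ^ m`, so `n = 5N`. For a `(2N - 1)`-set `H`, take the tree with the points of `H` at
depth `m + 1` and `Hᶜ` hanging below them, and its dyadic distribution: mass `1 / (2N)` on each
point of `H`, the remaining `1 / (2N)` on `Hᶜ`. By the equality case of Gibbs' inequality every
optimal tree for it has the same depths, so its root question has mass `1 / 2`, and integrality
forces that question or its complement to be an `N`-subset of `H`. An `N`-set lies in only
`C(4N, N - 1)` of the `C(5N, 2N - 1)` sets `H`, so an optimal question set has at least
`C(5N, 2N - 1) / (2 C(4N, N - 1)) = C(5N, N) / centralBinom N` members. Finally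
`C(5N, N) ≥ 5 ^ (5N) / (4 ^ (4N) (5N + 1))`, the largest term of `(4 + 1) ^ (5N)`, and
`centralBinom N ^ 2 ≤ 16 ^ N / (3N + 1)` give the bound with `C = 2`.
-/

namespace TQ
namespace DTree

variable {α : Type}

def caterpillar [Inhabited α] : List α → DTree α
  | [] => leaf default
  | [x] => leaf x
  | x :: y :: rest => node {x} (leaf x) (caterpillar (y :: rest))

theorem caterpillar_leaves [Inhabited α] : ∀ {l : List α}, l ≠ [] → (caterpillar l).leaves = l
  | [], h => absurd rfl h
  | [_], _ => rfl
  | x :: y :: rest, _ => by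
    simp [caterpillar, leaves, caterpillar_leaves (List.cons_ne_nil y rest)]

variable [DecidableEq α]

theorem find?_node (q : Finset α) (t f : DTree α) (x : α) :
    (node q t f).find? x = (if x ∈ q then t.find? x else f.find? x).map (· + 1) := rfl

theorem mem_leaves_of_find?_ne_none {T : DTree α} {x : α} (h : T.find? x ≠ none) :
    x ∈ T.leaves := by
  induction T with
  | leaf y =>
    simp only [find?] at h
    split_ifs at h with hy
    · simp [leaves, hy]
    · exact absurd rfl h
  | node q t f iht ihf =>
    rw [find?_node, ne_eq, Option.map_eq_none_iff] at h
    simp only [leaves, List.mem_append]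
    split_ifs at h
    · exact .inl (iht h)
    · exact .inr (ihf h)

theorem find?_eq_some_depth {T : DTree α} {x : α} (h : T.find? x ≠ none) :
    T.find? x = some (T.depth x) :=
  (Option.getD_of_ne_none h 0).symm

noncomputable def leafWeight (T : DTree α) (x : α) : ℝ := (T.find? x).elim 0 ((2 : ℝ)⁻¹ ^ ·)

theorem leafWeight_of_find?_ne_none {T : DTree α} {x : α} (h : T.find? x ≠ none) :
    T.leafWeight x = (2 : ℝ)⁻¹ ^ T.depth x := by
  rw [leafWeight, find?_eq_some_depth h, Option.elim_some]

theorem leafWeight_pos {T : DTree α} {x : α} (h : T.find? x ≠ none) : 0 < T.leafWeight x := by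
  rw [leafWeight_of_find?_ne_none h]
  positivity

theorem leafWeight_of_not_mem_leaves {T : DTree α} {x : α} (h : x ∉ T.leaves) :
    T.leafWeight x = 0 := by
  rw [leafWeight, not_not.mp (mt mem_leaves_of_find?_ne_none h), Option.elim_none]

theorem leafWeight_nonneg (T : DTree α) (x : α) : 0 ≤ T.leafWeight x := by
  unfold leafWeight
  cases T.find? x <;> simp

theorem leafWeight_leaf (y x : α) : (leaf y).leafWeight x = if y = x then 1 else 0 := by
  unfold leafWeight find?
  split_ifs <;> simp

theorem leafWeight_node (q : Finset α) (t f : DTree α) (x : α) :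
    (node q t f).leafWeight x = (if x ∈ q then t.leafWeight x else f.leafWeight x) / 2 := by
  unfold leafWeight
  rw [find?_node]
  split_ifs <;> cases _ : find? _ x <;> simp [pow_succ, div_eq_mul_inv, mul_comm]

section Kraft

variable [Fintype α]

theorem sum_leafWeight_le_one (T : DTree α) : ∑ x, T.leafWeight x ≤ 1 := by
  induction T with
  | leaf y => simp [leafWeight_leaf]
  | node q t f iht ihf =>
    calc ∑ x, (node q t f).leafWeight x ≤ ∑ x, (t.leafWeight x + f.leafWeight x) / 2 := by
          refine Finset.sum_le_sum fun x _ => ?_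
          rw [leafWeight_node]
          split_ifs <;> linarith [t.leafWeight_nonneg x, f.leafWeight_nonneg x]
      _ ≤ 1 := by rw [← Finset.sum_div, Finset.sum_add_distrib]; linarith

theorem sum_leafWeight_eq_one {T : DTree α} (hnd : T.leaves.Nodup)
    (hfind : ∀ x ∈ T.leaves, T.find? x ≠ none) : ∑ x, T.leafWeight x = 1 := by
  induction T with
  | leaf y => simp [leafWeight_leaf]
  | node q t f iht ihf =>
    obtain ⟨hndt, hndf, hdisj⟩ := List.nodup_append.mp hnd
    have hfind' (x : α) (hx : x ∈ t.leaves ∨ x ∈ f.leaves) :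
        (if x ∈ q then t.find? x else f.find? x) ≠ none := by
      simpa [find?_node] using hfind x (List.mem_append.mpr hx)
    have hleft : ∀ x ∈ t.leaves, x ∈ q := fun x hx => by
      by_contra hxq
      have := hfind' x (.inl hx)
      rw [if_neg hxq] at this
      exact hdisj x hx x (mem_leaves_of_find?_ne_none this) rfl
    have hright : ∀ x ∈ f.leaves, x ∉ q := fun x hx hxq => by
      have := hfind' x (.inr hx)
      rw [if_pos hxq] at this
      exact hdisj x (mem_leaves_of_find?_ne_none this) x hx rfl
    have ht : ∑ x, t.leafWeight x = 1 := iht hndt fun x hx => by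
      simpa [if_pos (hleft x hx)] using hfind' x (.inl hx)
    have hf : ∑ x, f.leafWeight x = 1 := ihf hndf fun x hx => by
      simpa [if_neg (hright x hx)] using hfind' x (.inr hx)
    calc ∑ x, (node q t f).leafWeight x = ∑ x, (t.leafWeight x + f.leafWeight x) / 2 := by
          refine Finset.sum_congr rfl fun x _ => ?_
          rw [leafWeight_node]
          split_ifs with hxq
          · rw [leafWeight_of_not_mem_leaves fun hx => hright x hx hxq, add_zero]
          · rw [leafWeight_of_not_mem_leaves fun hx => hxq (hleft x hx), zero_add]
      _ = 1 := by rw [← Finset.sum_div, Finset.sum_add_distrib, ht, hf]; norm_num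

end Kraft

section Constructions

variable [Inhabited α]

theorem find?_caterpillar_ne_none : ∀ {l : List α} {x : α}, x ∈ l → (caterpillar l).find? x ≠ none
  | [y], x, hx => by simp_all [caterpillar, find?]
  | y :: z :: rest, x, hx => by
    rw [caterpillar, find?_node]
    split_ifs with hxy
    · simp [find?, Finset.mem_singleton.mp hxy]
    · have hx' : x ∈ z :: rest := (List.mem_cons.mp hx).resolve_left (by simpa using hxy)
      simpa using find?_caterpillar_ne_none hx'

def combine : ℕ → List (DTree α) → DTree α
  | 0, l => l.headD (leaf default)
  | k + 1, l => node ((l.take (2 ^ k)).flatMap leaves).toFinset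
      (combine k (l.take (2 ^ k))) (combine k (l.drop (2 ^ k)))

theorem length_take_drop_two_pow {β : Type*} {l : List β} {k : ℕ} (hl : l.length = 2 ^ (k + 1)) :
    (l.take (2 ^ k)).length = 2 ^ k ∧ (l.drop (2 ^ k)).length = 2 ^ k := by
  simp only [List.length_take, List.length_drop, hl, pow_succ]
  omega

theorem combine_leaves : ∀ (k : ℕ) {l : List (DTree α)}, l.length = 2 ^ k →
    (combine k l).leaves = l.flatMap leaves
  | 0, l, hl => by
    obtain ⟨t, rfl⟩ := List.length_eq_one_iff.mp (by simpa using hl)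
    simp [combine]
  | k + 1, l, hl => by
    obtain ⟨htake, hdrop⟩ := length_take_drop_two_pow hl
    rw [combine, leaves, combine_leaves k htake, combine_leaves k hdrop, ← List.flatMap_append,
      List.take_append_drop]

theorem find?_combine : ∀ (k : ℕ) {l : List (DTree α)}, l.length = 2 ^ k →
    (l.flatMap leaves).Nodup → ∀ {t : DTree α}, t ∈ l → ∀ {x : α} {v : ℕ}, t.find? x = some v →
    (combine k l).find? x = some (k + v)
  | 0, l, hl, _, t, ht, x, v, hv => by
    obtain ⟨t', rfl⟩ := List.length_eq_one_iff.mp (by simpa using hl)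
    obtain rfl : t = t' := by simpa using ht
    simpa [combine] using hv
  | k + 1, l, hl, hnd, t, ht, x, v, hv => by
    obtain ⟨htake, hdrop⟩ := length_take_drop_two_pow hl
    rw [← List.take_append_drop (2 ^ k) l, List.flatMap_append] at hnd
    obtain ⟨hndt, hndd, hdisj⟩ := List.nodup_append.mp hnd
    have hxt : x ∈ t.leaves := mem_leaves_of_find?_ne_none (by simp [hv])
    rw [combine, find?_node]
    rcases List.mem_append.mp ((List.take_append_drop (2 ^ k) l).symm ▸ ht) with h | h
    · rw [if_pos (List.mem_toFinset.mpr (List.mem_flatMap.mpr ⟨t, h, hxt⟩)),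
        find?_combine k htake hndt h hv]
      simp [Nat.add_right_comm]
    · have hxd : x ∈ (l.drop (2 ^ k)).flatMap leaves := List.mem_flatMap.mpr ⟨t, h, hxt⟩
      rw [if_neg fun hx => hdisj x (List.mem_toFinset.mp hx) x hxd rfl,
        find?_combine k hdrop hndd h hv]
      simp [Nat.add_right_comm]

end Constructions

end DTree

open DTree

variable {α : Type} [DecidableEq α]

theorem isValid_of_leaves {T : DTree α} {μ : α → ℝ} (hnd : T.leaves.Nodup)
    (hmem : ∀ x, x ∈ T.leaves ↔ μ x ≠ 0) (hfind : ∀ x ∈ T.leaves, T.find? x ≠ none) :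
    IsValid T μ :=
  ⟨hnd, hmem, fun x hx => find?_eq_some_depth (hfind x ((hmem x).mpr hx))⟩

theorem isValid_leafWeight {T : DTree α} (hnd : T.leaves.Nodup)
    (hfind : ∀ x, T.find? x ≠ none) : IsValid T T.leafWeight :=
  isValid_of_leaves hnd
    (fun x => ⟨fun _ => (leafWeight_pos (hfind x)).ne',
      fun _ => mem_leaves_of_find?_ne_none (hfind x)⟩)
    fun x _ => hfind x

variable [Fintype α]

theorem exists_isValid {μ : α → ℝ} (hμ : IsDistribution μ) : ∃ T : DTree α, IsValid T μ := by
  set s := Finset.univ.filter (μ · ≠ 0)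
  have hs : s.Nonempty := by
    by_contra h
    have : ∑ x, μ x = 0 := Finset.sum_eq_zero fun x _ => by
      by_contra hx
      exact h ⟨x, by simpa [s] using hx⟩
    linarith [hμ.2]
  have : Inhabited α := ⟨hs.choose⟩
  have hmem (x : α) : x ∈ s.toList ↔ μ x ≠ 0 := by simp [s]
  have hleaves := caterpillar_leaves (Finset.toList_eq_nil.not.mpr hs.ne_empty)
  exact ⟨_, isValid_of_leaves (hleaves ▸ s.nodup_toList) (by rw [hleaves]; exact hmem)
    fun x hx => find?_caterpillar_ne_none (hleaves ▸ hx)⟩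

theorem optCost_le_cost {μ : α → ℝ} (hμ : ∀ x, 0 ≤ μ x) {T : DTree α} (hT : IsValid T μ) :
    OptCost μ ≤ cost T μ := by
  refine csInf_le ⟨0, ?_⟩ ⟨T, hT, rfl⟩
  rintro _ ⟨T', -, rfl⟩
  exact Finset.sum_nonneg fun x _ => mul_nonneg (hμ x) (Nat.cast_nonneg _)

theorem depth_le_of_cost_le {μ : α → ℝ} (hμ : ∀ x, 0 ≤ μ x) {T : DTree α} {c : ℝ}
    (hc : cost T μ ≤ c) {x : α} (hx : 0 < μ x) : T.depth x ≤ ⌈c / μ x⌉₊ := by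
  have hterm : μ x * T.depth x ≤ cost T μ :=
    Finset.single_le_sum (f := fun y => μ y * (T.depth y : ℝ))
      (fun y _ => mul_nonneg (hμ y) (Nat.cast_nonneg _)) (Finset.mem_univ x)
  have : (T.depth x : ℝ) ≤ c / μ x := by
    rw [le_div_iff₀ hx]
    linarith
  exact_mod_cast this.trans (Nat.le_ceil _)

/-- Trees cheaper than a fixed valid tree have bounded depths on the support of `μ`, so they
realise only finitely many costs. -/
theorem exists_cost_eq_optCost {μ : α → ℝ} (hμ : IsDistribution μ) :
    ∃ T : DTree α, IsValid T μ ∧ cost T μ = OptCost μ := by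
  obtain ⟨T₀, hT₀⟩ := exists_isValid hμ
  set B := Finset.univ.sup fun x => ⌈cost T₀ μ / μ x⌉₊
  set S := {c | ∃ T : DTree α, IsValid T μ ∧ c = cost T μ}
  have hfin : (S ∩ Set.Iic (cost T₀ μ)).Finite := by
    refine (Set.finite_range fun g : α → Fin (B + 1) => ∑ x, μ x * ((g x : ℕ) : ℝ)).subset ?_
    rintro _ ⟨⟨T, hT, rfl⟩, hc⟩
    refine ⟨fun x => ⟨min (T.depth x) B, Nat.lt_succ_of_le (min_le_right _ _)⟩,
      Finset.sum_congr rfl fun x _ => ?_⟩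
    rcases (hμ.1 x).eq_or_lt with h0 | hpos
    · simp [← h0]
    · dsimp only
      rw [min_eq_left ((depth_le_of_cost_le hμ.1 hc hpos).trans
        (Finset.le_sup (f := fun x => ⌈cost T₀ μ / μ x⌉₊) (Finset.mem_univ x)))]
  obtain ⟨_, ⟨⟨T, hT, rfl⟩, hTle⟩, hmin⟩ :=
    Set.exists_min_image _ id hfin ⟨_, ⟨T₀, hT₀, rfl⟩, Set.mem_Iic.mpr le_rfl⟩
  refine ⟨T, hT, le_antisymm (le_csInf ⟨_, T₀, hT₀, rfl⟩ ?_) (optCost_le_cost hμ.1 hT)⟩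
  rintro _ ⟨T', hT', rfl⟩
  rcases le_total (cost T' μ) (cost T₀ μ) with h | h
  · exact hmin _ ⟨⟨T', hT', rfl⟩, h⟩
  · exact hTle.trans h

theorem achievesProlixity_univ (n : ℕ) :
    AchievesProlixity (Finset.univ : Finset (Finset (Fin n))) 0 := fun μ hμ => by
  obtain ⟨T, hT, hcost⟩ := exists_cost_eq_optCost hμ
  exact ⟨T, hT, by simp [UsesQuestions], by rw [hcost, add_zero]⟩

theorem inv_two_pow_eq_mul_exp (a b : ℕ) :
    (2 : ℝ)⁻¹ ^ b = 2⁻¹ ^ a * Real.exp ((a - b) * Real.log 2) := by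
  have h (k : ℕ) : (2 : ℝ)⁻¹ ^ k = Real.exp (-(k * Real.log 2)) := by
    rw [← Real.exp_log (by norm_num : (0 : ℝ) < 2⁻¹), ← Real.exp_nat_mul, Real.log_inv]
    ring_nf
  rw [h, h, ← Real.exp_add]
  ring_nf

/-- The equality case of Gibbs' inequality. -/
theorem eq_of_sum_inv_two_pow {ι : Type*} [Fintype ι] {d D : ι → ℕ}
    (hd : ∑ i, (2 : ℝ)⁻¹ ^ d i = 1) (hD : ∑ i, (2 : ℝ)⁻¹ ^ D i ≤ 1)
    (hcost : ∑ i, (2 : ℝ)⁻¹ ^ d i * D i ≤ ∑ i, (2 : ℝ)⁻¹ ^ d i * d i) : D = d := by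
  set L := Real.log 2
  have hL : 0 < L := Real.log_pos one_lt_two
  set g : ι → ℝ := fun i => 2⁻¹ ^ d i * (Real.exp ((d i - D i) * L) - 1 - (d i - D i) * L)
  have hg (i : ι) : 0 ≤ g i :=
    mul_nonneg (by positivity) (by linarith [Real.add_one_le_exp ((d i - D i : ℝ) * L)])
  have hsum : ∑ i, g i = (∑ i, (2 : ℝ)⁻¹ ^ D i - ∑ i, (2 : ℝ)⁻¹ ^ d i)
      - L * (∑ i, (2 : ℝ)⁻¹ ^ d i * d i - ∑ i, (2 : ℝ)⁻¹ ^ d i * D i) := by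
    simp only [g, Finset.mul_sum, ← Finset.sum_sub_distrib]
    refine Finset.sum_congr rfl fun i _ => ?_
    rw [inv_two_pow_eq_mul_exp (d i) (D i)]
    ring
  have hzero : ∀ i ∈ Finset.univ, g i = 0 :=
    (Finset.sum_eq_zero_iff_of_nonneg fun i _ => hg i).mp
      (le_antisymm (by rw [hsum]; nlinarith) (Finset.sum_nonneg fun i _ => hg i))
  funext i
  by_contra hne
  have hy : ((d i : ℝ) - D i) * L ≠ 0 :=
    mul_ne_zero (sub_ne_zero.mpr (by exact_mod_cast Ne.symm hne)) hL.ne'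
  have : 0 < g i := mul_pos (by positivity) (by linarith [Real.add_one_lt_exp hy])
  linarith [hzero i (Finset.mem_univ i)]

/-- By the equality case of Gibbs' inequality `T` has the depths of `T₀`, and then Kraft's
inequality for its two subtrees caps the mass on each side of the root by `1 / 2`. -/
theorem exists_eq_node_sum_leafWeight_eq_half [Nontrivial α] {T₀ : DTree α}
    (hnd : T₀.leaves.Nodup) (hfind : ∀ x, T₀.find? x ≠ none) {T : DTree α}
    (hT : IsValid T T₀.leafWeight) (hcost : cost T T₀.leafWeight ≤ cost T₀ T₀.leafWeight) :
    ∃ q t f, T = node q t f ∧ ∑ x ∈ q, T₀.leafWeight x = 1 / 2 := by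
  set μ := T₀.leafWeight
  have hμ (x : α) : μ x = 2⁻¹ ^ T₀.depth x := leafWeight_of_find?_ne_none (hfind x)
  have hμ_sum : ∑ x, μ x = 1 := sum_leafWeight_eq_one hnd fun x _ => hfind x
  have hTfind (x : α) : T.find? x ≠ none := by
    rw [hT.finds x (by rw [hμ]; positivity)]
    exact Option.some_ne_none _
  have hdepth : T.depth = T₀.depth := by
    refine eq_of_sum_inv_two_pow ?_ ?_ ?_
    · simpa only [hμ] using hμ_sum
    · simpa only [leafWeight_of_find?_ne_none (hTfind _)] using T.sum_leafWeight_le_one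
    · simpa only [cost, hμ] using hcost
  have hTμ (x : α) : T.leafWeight x = μ x := by
    rw [leafWeight_of_find?_ne_none (hTfind x), hdepth, hμ]
  obtain ⟨q, t, f, rfl⟩ : ∃ q t f, T = node q t f := by
    cases T with
    | leaf y =>
      obtain ⟨x, hx⟩ := exists_ne y
      simpa [find?, Ne.symm hx] using hTfind x
    | node q t f => exact ⟨q, t, f, rfl⟩
  refine ⟨q, t, f, rfl, ?_⟩
  have hhalf (s : Finset α) (T' : DTree α) (h : ∀ x ∈ s, μ x = T'.leafWeight x / 2) :
      ∑ x ∈ s, μ x ≤ 1 / 2 := by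
    rw [Finset.sum_congr rfl h, ← Finset.sum_div]
    linarith [(Finset.sum_le_univ_sum_of_nonneg (s := s) T'.leafWeight_nonneg).trans
      T'.sum_leafWeight_le_one]
  have hyes := hhalf q t fun x hx => by rw [← hTμ, leafWeight_node, if_pos hx]
  have hno := hhalf qᶜ f fun x hx => by
    rw [← hTμ, leafWeight_node, if_neg (Finset.mem_compl.mp hx)]
  linarith [Finset.sum_compl_add_sum q μ]

namespace DTree

section HardTree

variable [Inhabited α]

noncomputable def hardForest (H : Finset α) : List (DTree α) :=
  H.toList.map leaf ++ [caterpillar Hᶜ.toList]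

/-- When `#H + 1 = 2 ^ k`, the points of `H` sit at depth `k` and `Hᶜ` hangs below in a
caterpillar. -/
noncomputable def hardTree (k : ℕ) (H : Finset α) : DTree α := combine k (hardForest H)

variable {k : ℕ} {H : Finset α}

theorem length_hardForest (hk : H.card + 1 = 2 ^ k) : (hardForest H).length = 2 ^ k := by
  simpa [hardForest] using hk

theorem nodup_flatMap_leaves_hardForest (hH : Hᶜ.Nonempty) :
    ((hardForest H).flatMap leaves).Nodup := by
  have hleaves : (hardForest H).flatMap leaves = H.toList ++ Hᶜ.toList := by
    simp [hardForest, List.flatMap_map, leaves,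
      caterpillar_leaves (Finset.toList_eq_nil.not.mpr hH.ne_empty)]
  rw [hleaves]
  refine List.nodup_append.mpr ⟨H.nodup_toList, Hᶜ.nodup_toList, fun a ha b hb hab => ?_⟩
  simp_all

theorem hardTree_leaves_nodup (hk : H.card + 1 = 2 ^ k) (hH : Hᶜ.Nonempty) :
    (hardTree k H).leaves.Nodup := by
  rw [hardTree, combine_leaves k (length_hardForest hk)]
  exact nodup_flatMap_leaves_hardForest hH

theorem find?_hardTree_of_mem (hk : H.card + 1 = 2 ^ k) (hH : Hᶜ.Nonempty) {x : α}
    (hx : x ∈ H) : (hardTree k H).find? x = some k :=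
  find?_combine (v := 0) k (length_hardForest hk) (nodup_flatMap_leaves_hardForest hH)
    (List.mem_append_left _ (List.mem_map_of_mem (Finset.mem_toList.mpr hx)))
    (by simp [find?])

theorem find?_hardTree_ne_none (hk : H.card + 1 = 2 ^ k) (hH : Hᶜ.Nonempty) (x : α) :
    (hardTree k H).find? x ≠ none := by
  by_cases hx : x ∈ H
  · simp [find?_hardTree_of_mem hk hH hx]
  · obtain ⟨v, hv⟩ := Option.ne_none_iff_exists'.mp
      (find?_caterpillar_ne_none (Finset.mem_toList.mpr (Finset.mem_compl.mpr hx)))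
    simp [hardTree, find?_combine k (length_hardForest hk) (nodup_flatMap_leaves_hardForest hH)
      (List.mem_append_right _ (List.mem_singleton_self _)) hv]

end HardTree

end DTree

theorem subset_or_compl_subset_of_sum_eq {μ : α → ℝ} (hpos : ∀ x, 0 < μ x) {H : Finset α}
    {N : ℕ} {c : ℝ} (hH : H.card + 1 = 2 * N) (hHc : ∀ x ∈ H, μ x = c)
    (htot : ∑ x, μ x = 2 * N * c) {q : Finset α} (hq : ∑ x ∈ q, μ x = N * c) :
    (q ⊆ H ∧ q.card = N) ∨ (qᶜ ⊆ H ∧ qᶜ.card = N) := by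
  obtain ⟨x₀, hx₀⟩ : H.Nonempty := Finset.card_pos.mp (by omega)
  have hc : 0 < c := hHc x₀ hx₀ ▸ hpos x₀
  have hsub (s : Finset α) (hs : s ⊆ H) : ∑ x ∈ s, μ x = s.card * c := by
    rw [Finset.sum_congr rfl fun x hx => hHc x (hs hx), Finset.sum_const, nsmul_eq_mul]
  have hcard (s : Finset α) (hs : s ⊆ H) (h : ∑ x ∈ s, μ x = N * c) : s.card = N := by
    rw [hsub s hs] at h
    exact_mod_cast mul_right_cancel₀ hc.ne' h
  have hrest : ∑ x ∈ Hᶜ, μ x = c := by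
    have hsplit := Finset.sum_compl_add_sum H μ
    have hHcard : (H.card : ℝ) + 1 = 2 * N := by exact_mod_cast hH
    rw [hsub H subset_rfl, htot] at hsplit
    linear_combination hsplit - c * hHcard
  have hdich : q ⊆ H ∨ qᶜ ⊆ H := by
    by_contra! h
    obtain ⟨y, hyq, hyH⟩ := Finset.not_subset.mp h.1
    obtain ⟨z, hzq, hzH⟩ := Finset.not_subset.mp h.2
    -- the mass `s` of `q` outside `H` would lie strictly between `0` and `c`, so that
    -- `#(q ∩ H) c + s = N c` had no integer solution `#(q ∩ H)`
    set s := ∑ x ∈ q \ H, μ x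
    have hs_pos : 0 < s := (hpos y).trans_le <| Finset.single_le_sum (fun x _ => (hpos x).le)
      (Finset.mem_sdiff.mpr ⟨hyq, hyH⟩)
    have hs_lt : s < c := by
      have hsubset : q \ H ⊆ Hᶜ.erase z := fun x hx => by
        obtain ⟨hxq, hxH⟩ := Finset.mem_sdiff.mp hx
        exact Finset.mem_erase.mpr ⟨fun h => Finset.mem_compl.mp hzq (h ▸ hxq),
          Finset.mem_compl.mpr hxH⟩
      calc s ≤ ∑ x ∈ Hᶜ.erase z, μ x :=
            Finset.sum_le_sum_of_subset_of_nonneg hsubset fun x _ _ => (hpos x).le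
        _ = c - μ z := by rw [Finset.sum_erase_eq_sub (Finset.mem_compl.mpr hzH), hrest]
        _ < c := by linarith [hpos z]
    have hsplit : ((q ∩ H).card : ℝ) * c + s = N * c := by
      rw [← hsub _ Finset.inter_subset_right, Finset.sum_inter_add_sum_sdiff, hq]
    have h1 : ((q ∩ H).card : ℝ) < N := lt_of_mul_lt_mul_right (by linarith) hc.le
    have h2 : (N : ℝ) < (q ∩ H).card + 1 := lt_of_mul_lt_mul_right (by linarith) hc.le
    norm_cast at h1 h2
    omega
  rcases hdich with h | h
  · exact .inl ⟨h, hcard q h hq⟩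
  · exact .inr ⟨h, hcard qᶜ h (by linarith [Finset.sum_compl_add_sum q μ])⟩

/-- `Q` must contain the root question of an optimal tree for the dyadic distribution of
`hardTree (m + 1) H`. -/
theorem exists_mem_subset_card_eq {n m : ℕ} {Q : Finset (Finset (Fin n))}
    (hQ : AchievesProlixity Q 0) {H : Finset (Fin n)} (hH : H.card + 1 = 2 * 2 ^ m)
    (hHn : H.card < n) :
    ∃ q ∈ Q, (q ⊆ H ∧ q.card = 2 ^ m) ∨ (qᶜ ⊆ H ∧ qᶜ.card = 2 ^ m) := by
  have : Inhabited (Fin n) := ⟨⟨0, by omega⟩⟩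
  have : Nontrivial (Fin n) := Fin.nontrivial_iff_two_le.mpr (by omega)
  have hk : H.card + 1 = 2 ^ (m + 1) := by rw [pow_succ]; omega
  have hHc : Hᶜ.Nonempty := Finset.card_pos.mp (by rw [Finset.card_compl, Fintype.card_fin]; omega)
  set T₀ := hardTree (m + 1) H
  have hnd := hardTree_leaves_nodup hk hHc
  have hfind := find?_hardTree_ne_none hk hHc
  have hdist : IsDistribution T₀.leafWeight :=
    ⟨leafWeight_nonneg T₀, sum_leafWeight_eq_one hnd fun x _ => hfind x⟩
  obtain ⟨T, hT, huse, hcost⟩ := hQ _ hdist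
  have hcost₀ : cost T T₀.leafWeight ≤ cost T₀ T₀.leafWeight := by
    linarith [optCost_le_cost hdist.1 (isValid_leafWeight hnd hfind)]
  obtain ⟨q, t, f, rfl, hq⟩ := exists_eq_node_sum_leafWeight_eq_half hnd hfind hT hcost₀
  have hc : (2 : ℝ) ^ m * 2⁻¹ ^ (m + 1) = 1 / 2 := by
    rw [pow_succ, inv_pow]
    field_simp
  refine ⟨q, huse (Set.mem_insert q _), subset_or_compl_subset_of_sum_eq
    (c := 2⁻¹ ^ (m + 1)) (fun x => leafWeight_pos (hfind x)) hH (fun x hx => ?_) ?_ ?_⟩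
  · rw [leafWeight, find?_hardTree_of_mem hk hHc hx, Option.elim_some]
  · push_cast
    linarith [hdist.2]
  · push_cast
    linarith

theorem choose_mul_pow_le_succ {n a k : ℕ} (h : k + 1 ≤ (n - k) * a) :
    n.choose k * a ^ k ≤ n.choose (k + 1) * a ^ (k + 1) := by
  refine Nat.le_of_mul_le_mul_right (c := k + 1) ?_ (by omega)
  calc n.choose k * a ^ k * (k + 1) = n.choose k * (k + 1) * a ^ k := by ring
    _ ≤ n.choose k * ((n - k) * a) * a ^ k := by gcongr
    _ = n.choose (k + 1) * (k + 1) * a ^ (k + 1) := by rw [Nat.choose_succ_right_eq]; ring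
    _ = _ := by ring

theorem choose_mul_pow_succ_le {n a k : ℕ} (h : (n - k) * a ≤ k + 1) :
    n.choose (k + 1) * a ^ (k + 1) ≤ n.choose k * a ^ k := by
  refine Nat.le_of_mul_le_mul_right (c := k + 1) ?_ (by omega)
  calc n.choose (k + 1) * a ^ (k + 1) * (k + 1) = n.choose (k + 1) * (k + 1) * a ^ (k + 1) := by
        ring
    _ = n.choose k * ((n - k) * a) * a ^ k := by rw [Nat.choose_succ_right_eq]; ring
    _ ≤ n.choose k * (k + 1) * a ^ k := by gcongr
    _ = _ := by ring

theorem choose_mul_pow_le_choose_mul_pow (a N k : ℕ) :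
    ((a + 1) * N).choose k * a ^ k ≤ ((a + 1) * N).choose (a * N) * a ^ (a * N) := by
  set t : ℕ → ℕ := fun k => ((a + 1) * N).choose k * a ^ k
  have hn : (a + 1) * N = a * N + N := by ring
  rcases le_total k (a * N) with hk | hk
  · refine monotoneOn_of_le_succ (f := t) Set.ordConnected_Iic (fun j _ _ hj => ?_) hk
      (Set.mem_Iic.mpr le_rfl) hk
    apply choose_mul_pow_le_succ
    have hj : j + 1 ≤ a * N := hj
    calc j + 1 ≤ a * N + a := by omega
      _ = (N + 1) * a := by ring
      _ ≤ _ := Nat.mul_le_mul_right a (by omega)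
  · refine antitoneOn_of_succ_le (f := t) Set.ordConnected_Ici (fun j _ hj _ => ?_)
      (Set.mem_Ici.mpr le_rfl) hk hk
    apply choose_mul_pow_succ_le
    have hj : a * N ≤ j := hj
    calc ((a + 1) * N - j) * a ≤ N * a := Nat.mul_le_mul_right a (by omega)
      _ ≤ j + 1 := by rw [mul_comm]; omega

theorem pow_le_choose_mul_pow (a N : ℕ) :
    (a + 1) ^ ((a + 1) * N) ≤ ((a + 1) * N).choose N * a ^ (a * N) * ((a + 1) * N + 1) := by
  calc (a + 1) ^ ((a + 1) * N)
      = ∑ k ∈ Finset.range ((a + 1) * N + 1), ((a + 1) * N).choose k * a ^ k := by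
        rw [add_pow]
        simp [mul_comm]
    _ ≤ ∑ _k ∈ Finset.range ((a + 1) * N + 1), ((a + 1) * N).choose (a * N) * a ^ (a * N) :=
        Finset.sum_le_sum fun k _ => choose_mul_pow_le_choose_mul_pow a N k
    _ = _ := by
        rw [Finset.sum_const, Finset.card_range, smul_eq_mul,
          Nat.choose_symm_of_eq_add (by ring : (a + 1) * N = a * N + N)]
        ring

theorem centralBinom_sq_mul_le (N : ℕ) : N.centralBinom ^ 2 * (3 * N + 1) ≤ 16 ^ N := by
  induction N with
  | zero => simp
  | succ N ih =>
    have hstep : 4 * (2 * N + 1) ^ 2 * (3 * N + 4) ≤ 16 * ((N + 1) ^ 2 * (3 * N + 1)) := by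
      nlinarith
    refine Nat.le_of_mul_le_mul_right (c := (N + 1) ^ 2 * (3 * N + 1)) ?_ (by positivity)
    calc (N + 1).centralBinom ^ 2 * (3 * (N + 1) + 1) * ((N + 1) ^ 2 * (3 * N + 1))
        = ((N + 1) * (N + 1).centralBinom) ^ 2 * ((3 * N + 4) * (3 * N + 1)) := by ring
      _ = 4 * (2 * N + 1) ^ 2 * (3 * N + 4) * (N.centralBinom ^ 2 * (3 * N + 1)) := by
        rw [Nat.succ_mul_centralBinom_succ]; ring
      _ ≤ 16 * ((N + 1) ^ 2 * (3 * N + 1)) * 16 ^ N := by gcongr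
      _ = 16 ^ (N + 1) * ((N + 1) ^ 2 * (3 * N + 1)) := by ring

theorem two_mul_choose_eq_centralBinom {N : ℕ} (hN : 0 < N) :
    2 * (2 * N - 1).choose N = N.centralBinom := by
  obtain ⟨K, rfl⟩ : ∃ K, N = K + 1 := ⟨N - 1, by omega⟩
  rw [Nat.centralBinom_eq_two_mul_choose, show 2 * (K + 1) - 1 = 2 * K + 1 by omega,
    show 2 * (K + 1) = 2 * K + 1 + 1 by ring, Nat.choose_succ_succ' (2 * K + 1) K,
    Nat.choose_symm_half]
  ring

theorem choose_le_card_mul_choose {n k N : ℕ} (hα : Fintype.card α = n)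
    {𝒮 : Finset (Finset α)} (h : ∀ H : Finset α, H.card = k → ∃ S ∈ 𝒮, S ⊆ H ∧ S.card = N) :
    n.choose k ≤ 𝒮.card * (n - N).choose (k - N) := by
  have hcover : Finset.powersetCard k Finset.univ ⊆ (𝒮.filter (·.card = N)).biUnion
      fun S => (Finset.powersetCard (k - N) Sᶜ).image (· ∪ S) := by
    intro H hH
    obtain ⟨-, hHk⟩ := Finset.mem_powersetCard.mp hH
    obtain ⟨S, hS, hSH, hSN⟩ := h H hHk
    refine Finset.mem_biUnion.mpr ⟨S, Finset.mem_filter.mpr ⟨hS, hSN⟩,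
      Finset.mem_image.mpr ⟨H \ S, Finset.mem_powersetCard.mpr ⟨?_, ?_⟩,
        Finset.sdiff_union_of_subset hSH⟩⟩
    · exact fun x hx => Finset.mem_compl.mpr (Finset.mem_sdiff.mp hx).2
    · rw [Finset.card_sdiff_of_subset hSH, hHk, hSN]
  calc n.choose k = (Finset.powersetCard k (Finset.univ : Finset α)).card := by
        rw [Finset.card_powersetCard, Finset.card_univ, hα]
    _ ≤ _ := Finset.card_le_card hcover
    _ ≤ (𝒮.filter (·.card = N)).card * (n - N).choose (k - N) :=
        Finset.card_biUnion_le_card_mul _ _ _ fun S hS => Finset.card_image_le.trans <| by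
          rw [Finset.card_powersetCard, Finset.card_compl, hα, (Finset.mem_filter.mp hS).2]
    _ ≤ _ := Nat.mul_le_mul_right _ (Finset.card_filter_le _ _)

theorem choose_le_card_mul_centralBinom {m : ℕ} {Q : Finset (Finset (Fin (5 * 2 ^ m)))}
    (hQ : AchievesProlixity Q 0) : (5 * 2 ^ m).choose (2 ^ m) ≤ Q.card * (2 ^ m).centralBinom := by
  have hN : 0 < 2 ^ m := by positivity
  have hcount := choose_le_card_mul_choose (k := 2 * 2 ^ m - 1) (N := 2 ^ m) (Fintype.card_fin _)
    (𝒮 := Q ∪ Q.image compl) fun H hH => by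
      obtain ⟨q, hq, hq' | hq'⟩ :=
        exists_mem_subset_card_eq hQ (m := m) (H := H) (by omega) (by omega)
      · exact ⟨q, Finset.mem_union_left _ hq, hq'⟩
      · exact ⟨qᶜ, Finset.mem_union_right _ (Finset.mem_image_of_mem _ hq), hq'⟩
  rw [show 5 * 2 ^ m - 2 ^ m = 4 * 2 ^ m by omega,
    show 2 * 2 ^ m - 1 - 2 ^ m = 2 ^ m - 1 by omega] at hcount
  have hcard : (Q ∪ Q.image compl).card ≤ 2 * Q.card :=
    (Finset.card_union_le _ _).trans (by linarith [Finset.card_image_le (s := Q) (f := compl)])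
  have hmul : (5 * 2 ^ m).choose (2 * 2 ^ m - 1) * (2 * 2 ^ m - 1).choose (2 ^ m)
      = (5 * 2 ^ m).choose (2 ^ m) * (4 * 2 ^ m).choose (2 ^ m - 1) := by
    rw [Nat.choose_mul (by omega), show 5 * 2 ^ m - 2 ^ m = 4 * 2 ^ m by omega,
      show 2 * 2 ^ m - 1 - 2 ^ m = 2 ^ m - 1 by omega]
  refine Nat.le_of_mul_le_mul_right (c := (4 * 2 ^ m).choose (2 ^ m - 1)) ?_
    (Nat.choose_pos (by omega))
  calc (5 * 2 ^ m).choose (2 ^ m) * (4 * 2 ^ m).choose (2 ^ m - 1)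
      = (5 * 2 ^ m).choose (2 * 2 ^ m - 1) * (2 * 2 ^ m - 1).choose (2 ^ m) := hmul.symm
    _ ≤ 2 * Q.card * (4 * 2 ^ m).choose (2 ^ m - 1) * (2 * 2 ^ m - 1).choose (2 ^ m) := by
        gcongr
        exact hcount.trans (Nat.mul_le_mul_right _ hcard)
    _ = Q.card * (2 ^ m).centralBinom * (4 * 2 ^ m).choose (2 ^ m - 1) := by
        rw [← two_mul_choose_eq_centralBinom hN]
        ring

theorem sq_five_pow_le {N K : ℕ} (hN : 0 < N) (h : (5 * N).choose N ≤ K * N.centralBinom) :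
    (5 ^ (5 * N)) ^ 2 ≤ 5 * N * (2 * K * 4 ^ (5 * N)) ^ 2 := by
  have hchoose : 5 ^ (5 * N) ≤ (5 * N).choose N * 4 ^ (4 * N) * (5 * N + 1) := by
    simpa using pow_le_choose_mul_pow 4 N
  have hcentral := centralBinom_sq_mul_le N
  rw [show 16 ^ N = 4 ^ (2 * N) by rw [pow_mul]; norm_num] at hcentral
  refine Nat.le_of_mul_le_mul_right (c := 3 * N + 1) ?_ (by omega)
  calc (5 ^ (5 * N)) ^ 2 * (3 * N + 1)
      ≤ ((5 * N).choose N * 4 ^ (4 * N) * (5 * N + 1)) ^ 2 * (3 * N + 1) := by gcongr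
    _ ≤ (K * N.centralBinom * 4 ^ (4 * N) * (5 * N + 1)) ^ 2 * (3 * N + 1) := by gcongr
    _ = K ^ 2 * (4 ^ (4 * N)) ^ 2 * (5 * N + 1) ^ 2 * (N.centralBinom ^ 2 * (3 * N + 1)) := by
        ring
    _ ≤ K ^ 2 * (4 ^ (4 * N)) ^ 2 * (4 * (5 * N) * (3 * N + 1)) * 4 ^ (2 * N) := by
        gcongr
        nlinarith
    _ = 5 * N * (2 * K * 4 ^ (5 * N)) ^ 2 * (3 * N + 1) := by ring

theorem le_card_of_choose_le {N K : ℕ} (hN : 0 < N) (h : (5 * N).choose N ≤ K * N.centralBinom) :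
    (1.25 : ℝ) ^ (5 * N) / (2 * Real.sqrt ((5 * N : ℕ) : ℝ)) ≤ K := by
  have hsq : ((5 : ℝ) ^ (5 * N)) ^ 2 ≤ (Real.sqrt (5 * N : ℕ) * (2 * K * 4 ^ (5 * N))) ^ 2 := by
    rw [mul_pow, Real.sq_sqrt (Nat.cast_nonneg _)]
    exact_mod_cast sq_five_pow_le hN h
  have hle := (pow_le_pow_iff_left₀ (by positivity) (by positivity) two_ne_zero).mp hsq
  rw [div_le_iff₀ (by positivity), show (1.25 : ℝ) = 5 / 4 by norm_num, div_pow,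
    div_le_iff₀ (by positivity)]
  linarith

end TQ

open TQ in
/-- For `n = 5·2^m`, every optimal set of questions has size at least `1.25^n/O(√n)`. -/
theorem uOpt_zero_lower_special :
    ∃ C : ℝ, 0 < C ∧ ∀ m : ℕ,
      (1.25 : ℝ) ^ (5 * 2 ^ m) / (C * Real.sqrt ((5 * 2 ^ m : ℕ) : ℝ))
        ≤ (uOpt (5 * 2 ^ m) 0 : ℝ) := by
  refine ⟨2, two_pos, fun m => ?_⟩
  obtain ⟨Q, hQcard, hQ⟩ := Nat.sInf_mem (⟨_, Finset.univ, rfl, achievesProlixity_univ _⟩ :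
    {k | ∃ Q : Finset (Finset (Fin (5 * 2 ^ m))), Q.card = k ∧ AchievesProlixity Q 0}.Nonempty)
  rw [uOpt, ← hQcard]
  exact le_card_of_choose_le (by positivity) (choose_le_card_mul_centralBinom hQ)
end

section
/- Let S = {x_1,...,x_{⌊n/2⌋}} ⊆ X_n and let Q = {A ⊆ X_n : A ⊆ S or S ⊆ A} be the cone of S. Then Q has cardinality 2^{⌊n/2⌋} + 2^{⌈n/2⌉} − 1, and Q is an optimal set of questions: for every probability distribution μ on X_n, c_Q(μ) = Opt(μ). -/
/-!
The depths `d x` of the leaves of any decision tree of height `D` satisfy Kraft's inequality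
`∑ 2 ^ (D - d x) ≤ 2 ^ D`. Conversely, every depth profile satisfying it is realized by a tree
asking only questions from the cone of `S`: a family of dyadic weights `2 ^ e x ≤ 2 ^ D` of total
at most `2 ^ (D + 1)` splits into two halves of weight at most `2 ^ D` each, such that the Yes half
lies inside `S` or the No half avoids `S`. If the part inside `S` (or the part outside `S`) is
too heavy, greedily carve out of it a subfamily of weight exactly `2 ^ D`; otherwise split along
`S` itself. So every valid tree is dominated, leaf by leaf, by a valid cone tree.
-/

open Finset

namespace TQ

variable {α : Type}

theorem two_pow_lt_sum_two_pow {C : Finset α} (hC : C.Nontrivial) (e : α → ℕ) {x : α}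
    (hx : x ∈ C) : 2 ^ e x < ∑ y ∈ C, 2 ^ e y := by
  obtain ⟨y, hy, hyx⟩ := hC.exists_ne x
  exact single_lt_sum (f := fun y => 2 ^ e y) hyx hx hy (by positivity) fun _ _ _ => by positivity

theorem DTree.leaves_ne_nil (T : DTree α) : T.leaves ≠ [] := by
  cases T <;> simp [leaves, leaves_ne_nil]

variable [DecidableEq α]

def cone (S : Finset α) : Set (Finset α) := {A | A ⊆ S ∨ S ⊆ A}

theorem card_filter_subset_or_superset [Fintype α] (S : Finset α) :
    #{A : Finset α | A ⊆ S ∨ S ⊆ A} = 2 ^ #S + 2 ^ (Fintype.card α - #S) - 1 := by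
  have hsub : ({A : Finset α | A ⊆ S} : Finset (Finset α)) = S.powerset := by ext; simp
  have hsup : ({A : Finset α | S ⊆ A} : Finset (Finset α)) = Icc S univ := by ext; simp
  have hboth : ({A : Finset α | A ⊆ S} : Finset (Finset α)) ∩
      ({A : Finset α | S ⊆ A} : Finset (Finset α)) = {S} := by
    ext; simp [subset_antisymm_iff]
  have := card_union_add_card_inter ({A : Finset α | A ⊆ S} : Finset (Finset α))
    ({A : Finset α | S ⊆ A} : Finset (Finset α))
  rw [hboth, hsub, hsup, card_powerset, card_Icc_finset (subset_univ S), card_univ,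
    card_singleton] at this
  rw [filter_or, hsub, hsup]
  omega

theorem exists_subset_sum_two_pow_eq (e : α → ℕ) (m : ℕ) {C : Finset α}
    (he : ∀ x ∈ C, e x ≤ m) (hw : 2 ^ m ≤ ∑ x ∈ C, 2 ^ e x) :
    ∃ Y ⊆ C, ∑ x ∈ Y, 2 ^ e x = 2 ^ m := by
  induction m generalizing C with
  | zero =>
    obtain ⟨x, hx⟩ := nonempty_of_sum_ne_zero (by omega : ∑ x ∈ C, 2 ^ e x ≠ 0)
    exact ⟨{x}, singleton_subset_iff.2 hx, by simp [Nat.le_zero.1 (he x hx)]⟩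
  | succ m ih =>
    by_cases hmax : ∃ x ∈ C, e x = m + 1
    · obtain ⟨x, hx, hex⟩ := hmax
      exact ⟨{x}, singleton_subset_iff.2 hx, by simp [hex]⟩
    push Not at hmax
    have he' : ∀ x ∈ C, e x ≤ m := fun x hx => by have := he x hx; have := hmax x hx; omega
    have hpow : 2 ^ (m + 1) = 2 ^ m + 2 ^ m := by rw [pow_succ, mul_two]
    obtain ⟨Y₁, hY₁C, hY₁⟩ := ih he' (by omega)
    have hrest := sum_sdiff hY₁C (f := fun x => 2 ^ e x)
    obtain ⟨Y₂, hY₂C, hY₂⟩ :=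
      ih (C := C \ Y₁) (fun x hx => he' x (mem_sdiff.1 hx).1) (by omega)
    have hdisj : Disjoint Y₁ Y₂ := disjoint_of_subset_right hY₂C disjoint_sdiff
    refine ⟨Y₁ ∪ Y₂, union_subset hY₁C (hY₂C.trans sdiff_subset), ?_⟩
    rw [sum_union hdisj, hY₁, hY₂, hpow]

theorem exists_mem_cone_sum_filter_le (S : Finset α) {C : Finset α} {e : α → ℕ} {D : ℕ}
    (he : ∀ x ∈ C, e x ≤ D) (hw : ∑ x ∈ C, 2 ^ e x ≤ 2 ^ (D + 1)) :
    ∃ A ∈ cone S, ∑ x ∈ C with x ∈ A, 2 ^ e x ≤ 2 ^ D ∧ ∑ x ∈ C with x ∉ A, 2 ^ e x ≤ 2 ^ D := by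
  have hpow : 2 ^ (D + 1) = 2 ^ D + 2 ^ D := by rw [pow_succ, mul_two]
  have hrest : ∀ Y ⊆ C, ∑ x ∈ Y, 2 ^ e x = 2 ^ D → ∑ x ∈ C \ Y, 2 ^ e x ≤ 2 ^ D :=
    fun Y hY hYw => by have := sum_sdiff hY (f := fun x => 2 ^ e x); omega
  by_cases hin : 2 ^ D ≤ ∑ x ∈ C with x ∈ S, 2 ^ e x
  · obtain ⟨Y, hYS, hYw⟩ :=
      exists_subset_sum_two_pow_eq e D (fun x hx => he x (mem_filter.1 hx).1) hin
    have hYC : Y ⊆ C := hYS.trans (filter_subset _ _)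
    refine ⟨Y, Or.inl fun x hx => (mem_filter.1 (hYS hx)).2, ?_, ?_⟩
    · rw [filter_mem_eq_inter, inter_eq_right.2 hYC, hYw]
    · rw [filter_notMem_eq_sdiff]
      exact hrest Y hYC hYw
  by_cases hout : 2 ^ D ≤ ∑ x ∈ C with x ∉ S, 2 ^ e x
  · obtain ⟨Y, hYS, hYw⟩ :=
      exists_subset_sum_two_pow_eq e D (fun x hx => he x (mem_filter.1 hx).1) hout
    have hYC : Y ⊆ C := hYS.trans (filter_subset _ _)
    have hYout : ∀ x ∈ Y, x ∉ S := fun x hx => (mem_filter.1 (hYS hx)).2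
    have hyes : {x ∈ C | x ∈ S ∪ C \ Y} = C \ Y := by
      ext x
      have := hYout x
      simp only [mem_filter, mem_union, mem_sdiff]
      tauto
    have hno : {x ∈ C | x ∉ S ∪ C \ Y} = Y := by
      ext x
      have := hYout x
      have := @hYC x
      simp only [mem_filter, mem_union, mem_sdiff]
      tauto
    refine ⟨S ∪ C \ Y, Or.inr subset_union_left, ?_, ?_⟩
    · rw [hyes]
      exact hrest Y hYC hYw
    · rw [hno, hYw]
  · exact ⟨S, Or.inl subset_rfl, by omega, by omega⟩

namespace DTree

def height : DTree α → ℕ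
  | .leaf _ => 0
  | .node _ t f => max (height t) (height f) + 1

theorem find?_node_eq_some {q : Finset α} {t f : DTree α} {x : α} {k : ℕ}
    (h : (node q t f).find? x = some k) :
    1 ≤ k ∧ (if x ∈ q then t.find? x else f.find? x) = some (k - 1) := by
  obtain ⟨j, hj, rfl⟩ := Option.map_eq_some_iff.1 h
  exact ⟨by omega, by simpa using hj⟩

theorem le_height_of_find?_eq_some {T : DTree α} {x : α} {k : ℕ} (h : T.find? x = some k) :
    k ≤ T.height := by
  induction T generalizing k with
  | leaf y =>
    simp only [find?] at h
    split_ifs at h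
    cases h
    exact le_rfl
  | node q t f iht ihf =>
    obtain ⟨hk, hsub⟩ := find?_node_eq_some h
    split_ifs at hsub
    · have := iht (k := k - 1) hsub; simp only [height]; omega
    · have := ihf (k := k - 1) hsub; simp only [height]; omega

/-- Kraft's inequality, scaled by `2 ^ D` to stay in `ℕ`. -/
theorem sum_two_pow_sub_le (T : DTree α) {D : ℕ} (hD : T.height ≤ D) (C : Finset α)
    (k : α → ℕ) (hk : ∀ x ∈ C, T.find? x = some (k x)) :
    ∑ x ∈ C, 2 ^ (D - k x) ≤ 2 ^ D := by
  induction T generalizing D C k with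
  | leaf y =>
    have hC : C ⊆ {y} := fun x hx => by
      have := hk x hx
      simp only [find?] at this
      split_ifs at this with hyx
      simp [hyx]
    calc ∑ x ∈ C, 2 ^ (D - k x) ≤ ∑ x ∈ {y}, 2 ^ (D - k x) := sum_le_sum_of_subset hC
      _ ≤ 2 ^ D := by simpa using Nat.pow_le_pow_right two_pos (Nat.sub_le D (k y))
  | node q t f iht ihf =>
    simp only [height] at hD
    obtain ⟨D, rfl⟩ : ∃ D', D = D' + 1 := ⟨D - 1, by omega⟩
    have hshift : ∀ x ∈ C, 2 ^ (D + 1 - k x) = 2 ^ (D - (k x - 1)) := fun x hx => by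
      have := (find?_node_eq_some (hk x hx)).1
      congr 1
      omega
    have hyes : ∑ x ∈ C with x ∈ q, 2 ^ (D - (k x - 1)) ≤ 2 ^ D :=
      iht (by omega) _ (fun x => k x - 1) fun x hx => by
        obtain ⟨hxC, hxq⟩ := mem_filter.1 hx
        simpa [hxq] using (find?_node_eq_some (hk x hxC)).2
    have hno : ∑ x ∈ C with x ∉ q, 2 ^ (D - (k x - 1)) ≤ 2 ^ D :=
      ihf (by omega) _ (fun x => k x - 1) fun x hx => by
        obtain ⟨hxC, hxq⟩ := mem_filter.1 hx
        simpa [hxq] using (find?_node_eq_some (hk x hxC)).2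
    rw [sum_congr rfl hshift, ← sum_filter_add_sum_filter_not C (· ∈ q), pow_succ, mul_two]
    exact add_le_add hyes hno

/-- The budget `e x` is measured from depth `D` upwards, so that Kraft's condition for the depths
`D - e x` reads `∑ x ∈ C, 2 ^ e x ≤ 2 ^ D`. -/
structure Realizes (T : DTree α) (C : Finset α) (e : α → ℕ) (D : ℕ) : Prop where
  nodup : T.leaves.Nodup
  toFinset_leaves : T.leaves.toFinset = C
  finds : ∀ x ∈ C, ∃ k, T.find? x = some k ∧ k + e x ≤ D

variable {C : Finset α} {e : α → ℕ} {D : ℕ}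

theorem realizes_leaf {x : α} (h : e x ≤ D) : (leaf x).Realizes {x} e D where
  nodup := List.nodup_singleton x
  toFinset_leaves := by simp [leaves]
  finds y hy := ⟨0, by simp [find?, mem_singleton.1 hy], by simp [mem_singleton.1 hy, h]⟩

theorem Realizes.mono {T : DTree α} (hT : T.Realizes C e D) {D' : ℕ} (hD : D ≤ D') :
    T.Realizes C e D' :=
  ⟨hT.nodup, hT.toFinset_leaves, fun x hx =>
    let ⟨k, hk, hke⟩ := hT.finds x hx; ⟨k, hk, hke.trans hD⟩⟩

theorem Realizes.node {A : Finset α} {t f : DTree α} (ht : t.Realizes {x ∈ C | x ∈ A} e D)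
    (hf : f.Realizes {x ∈ C | x ∉ A} e D) : (node A t f).Realizes C e (D + 1) where
  nodup := by
    refine ht.nodup.append hf.nodup fun x hxt hxf => ?_
    have hxt' := ht.toFinset_leaves ▸ List.mem_toFinset.2 hxt
    have hxf' := hf.toFinset_leaves ▸ List.mem_toFinset.2 hxf
    exact (mem_filter.1 hxf').2 (mem_filter.1 hxt').2
  toFinset_leaves := by
    rw [leaves, List.toFinset_append, ht.toFinset_leaves, hf.toFinset_leaves,
      filter_union_filter_not_eq]
  finds x hx := by
    by_cases hxA : x ∈ A
    · obtain ⟨k, hk, hke⟩ := ht.finds x (mem_filter.2 ⟨hx, hxA⟩)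
      exact ⟨k + 1, by simp [find?, hxA, hk], by omega⟩
    · obtain ⟨k, hk, hke⟩ := hf.finds x (mem_filter.2 ⟨hx, hxA⟩)
      exact ⟨k + 1, by simp [find?, hxA, hk], by omega⟩

theorem Realizes.depth_add_le {T : DTree α} (hT : T.Realizes C e D) {x : α} (hx : x ∈ C) :
    T.depth x + e x ≤ D := by
  obtain ⟨k, hk, hke⟩ := hT.finds x hx
  simpa [depth, hk] using hke

theorem exists_cone_realizes (S : Finset α) (e : α → ℕ) (D : ℕ) {C : Finset α}
    (hC : C.Nonempty) (hw : ∑ x ∈ C, 2 ^ e x ≤ 2 ^ D) :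
    ∃ T : DTree α, T.questions ⊆ cone S ∧ T.Realizes C e D := by
  induction D generalizing C with
  | zero =>
    rcases hC.exists_eq_singleton_or_nontrivial with ⟨x, rfl⟩ | hC2
    · exact ⟨leaf x, by simp [questions],
        realizes_leaf ((Nat.pow_le_pow_iff_right one_lt_two).1 (by simpa using hw))⟩
    · obtain ⟨x, hx⟩ := hC
      have := two_pow_lt_sum_two_pow hC2 e hx
      have := Nat.one_le_two_pow (n := e x)
      omega
  | succ D ih =>
    rcases hC.exists_eq_singleton_or_nontrivial with ⟨x, rfl⟩ | hC2
    · exact ⟨leaf x, by simp [questions],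
        realizes_leaf ((Nat.pow_le_pow_iff_right one_lt_two).1 (by simpa using hw))⟩
    have he : ∀ x ∈ C, e x ≤ D := fun x hx => Nat.lt_succ_iff.1 <|
      (Nat.pow_lt_pow_iff_right one_lt_two).1 ((two_pow_lt_sum_two_pow hC2 e hx).trans_le hw)
    obtain ⟨A, hA, hyes, hno⟩ := exists_mem_cone_sum_filter_le S he hw
    rcases (C.filter (· ∈ A)).eq_empty_or_nonempty with hY | hY
    · rw [filter_true_of_mem fun x hx => (filter_eq_empty_iff.1 hY) hx] at hno
      obtain ⟨T, hTS, hT⟩ := ih hC hno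
      exact ⟨T, hTS, hT.mono D.le_succ⟩
    rcases (C.filter (· ∉ A)).eq_empty_or_nonempty with hN | hN
    · rw [filter_true_of_mem fun x hx => not_not.1 ((filter_eq_empty_iff.1 hN) hx)] at hyes
      obtain ⟨T, hTS, hT⟩ := ih hC hyes
      exact ⟨T, hTS, hT.mono D.le_succ⟩
    obtain ⟨t, htS, ht⟩ := ih hY hyes
    obtain ⟨f, hfS, hf⟩ := ih hN hno
    exact ⟨node A t f, Set.insert_subset_iff.2 ⟨hA, Set.union_subset htS hfS⟩, ht.node hf⟩

end DTree

variable [Fintype α] {μ : α → ℝ}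

theorem DTree.Realizes.isValid {T : DTree α} {e : α → ℕ} {D : ℕ}
    (hT : T.Realizes {x | μ x ≠ 0} e D) : IsValid T μ where
  nodup := hT.nodup
  mem_leaves x := by rw [← List.mem_toFinset, hT.toFinset_leaves]; simp
  finds x hx := by
    obtain ⟨k, hk, -⟩ := hT.finds x (by simpa using hx)
    simp [DTree.depth, hk]

theorem exists_isValid_cone (S : Finset α) (hμ : ∃ x, μ x ≠ 0) :
    ∃ T : DTree α, IsValid T μ ∧ UsesQuestions T (cone S) := by
  obtain ⟨x, hx⟩ := hμ
  obtain ⟨T, hTS, hT⟩ := DTree.exists_cone_realizes S (fun _ => 0) #{x | μ x ≠ 0}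
    (C := {x | μ x ≠ 0}) ⟨x, by simpa using hx⟩ (by simpa using Nat.lt_two_pow_self.le)
  exact ⟨T, hT.isValid, hTS⟩

theorem IsValid.exists_cone_depth_le (S : Finset α) {T : DTree α} (hT : IsValid T μ) :
    ∃ T' : DTree α, IsValid T' μ ∧ UsesQuestions T' (cone S) ∧
      ∀ x, μ x ≠ 0 → T'.depth x ≤ T.depth x := by
  obtain ⟨x, hx⟩ := List.exists_mem_of_ne_nil _ T.leaves_ne_nil
  have hfinds : ∀ y ∈ ({y | μ y ≠ 0} : Finset α), T.find? y = some (T.depth y) :=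
    fun y hy => hT.finds y (by simpa using hy)
  obtain ⟨T', hT'S, hT'⟩ := DTree.exists_cone_realizes S (fun y => T.height - T.depth y)
    T.height ⟨x, by simpa using (hT.mem_leaves x).1 hx⟩
    (T.sum_two_pow_sub_le le_rfl _ _ hfinds)
  refine ⟨T', hT'.isValid, hT'S, fun y hy => ?_⟩
  have hy' : y ∈ ({y | μ y ≠ 0} : Finset α) := by simpa using hy
  have := hT'.depth_add_le hy'
  have := DTree.le_height_of_find?_eq_some (hfinds y hy')
  omega

theorem cost_nonneg (hμ : ∀ x, 0 ≤ μ x) (T : DTree α) : 0 ≤ cost T μ :=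
  sum_nonneg fun x _ => mul_nonneg (hμ x) (Nat.cast_nonneg _)

theorem cost_le_cost (hμ : ∀ x, 0 ≤ μ x) {T T' : DTree α}
    (h : ∀ x, μ x ≠ 0 → T'.depth x ≤ T.depth x) : cost T' μ ≤ cost T μ := by
  refine sum_le_sum fun x _ => ?_
  by_cases hx : μ x = 0
  · simp [hx]
  · exact mul_le_mul_of_nonneg_left (by exact_mod_cast h x hx) (hμ x)

theorem cQ_eq_OptCost_of_forall_exists_cost_le (Q : Set (Finset α)) (hμ : ∀ x, 0 ≤ μ x)
    (hne : ∃ T : DTree α, IsValid T μ)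
    (h : ∀ T : DTree α, IsValid T μ →
      ∃ T', IsValid T' μ ∧ UsesQuestions T' Q ∧ cost T' μ ≤ cost T μ) :
    cQ Q μ = OptCost μ := by
  obtain ⟨T₀, hT₀⟩ := hne
  obtain ⟨T₁, hT₁, hT₁Q, -⟩ := h T₀ hT₀
  have hbdd : BddBelow {c | ∃ T : DTree α, IsValid T μ ∧ c = cost T μ} :=
    ⟨0, by rintro _ ⟨T, -, rfl⟩; exact cost_nonneg hμ T⟩
  have hbddQ : BddBelow {c | ∃ T : DTree α, IsValid T μ ∧ UsesQuestions T Q ∧ c = cost T μ} :=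
    ⟨0, by rintro _ ⟨T, -, -, rfl⟩; exact cost_nonneg hμ T⟩
  refine le_antisymm (le_csInf ⟨_, T₀, hT₀, rfl⟩ ?_)
    (csInf_le_csInf hbdd ⟨_, T₁, hT₁, hT₁Q, rfl⟩ fun c ⟨T, hT, _, hc⟩ => ⟨T, hT, hc⟩)
  rintro _ ⟨T, hT, rfl⟩
  obtain ⟨T', hT', hT'Q, hle⟩ := h T hT
  exact (csInf_le hbddQ ⟨T', hT', hT'Q, rfl⟩).trans hle

theorem cQ_cone_eq_OptCost (S : Finset α) (hμ : IsDistribution μ) :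
    cQ (cone S) μ = OptCost μ := by
  have hsupp : ∃ x, μ x ≠ 0 := by
    by_contra! h
    simpa [h] using hμ.2
  obtain ⟨T₀, hT₀, -⟩ := exists_isValid_cone S hsupp
  refine cQ_eq_OptCost_of_forall_exists_cost_le _ hμ.1 ⟨T₀, hT₀⟩ fun T hT => ?_
  obtain ⟨T', hT', hT'S, hle⟩ := hT.exists_cone_depth_le S
  exact ⟨T', hT', hT'S, cost_le_cost hμ.1 hle⟩

end TQ

open TQ in
/-- The cone of `S = {x_1,…,x_{⌊n/2⌋}}` has cardinality `2^{⌊n/2⌋} + 2^{⌈n/2⌉} − 1`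
and is an optimal set of questions: `c_Q(μ) = Opt(μ)` for every distribution `μ`. -/
theorem cone_is_optimal (n : ℕ) :
    ∀ S : Finset (Fin n), S = Finset.univ.filter (fun i : Fin n => (i : ℕ) < n / 2) →
    ∀ Q : Finset (Finset (Fin n)), Q = Finset.univ.filter (fun A => A ⊆ S ∨ S ⊆ A) →
      Q.card = 2 ^ (n / 2) + 2 ^ ((n + 1) / 2) - 1 ∧
      ∀ μ : Fin n → ℝ, IsDistribution μ → cQ (↑Q) μ = OptCost μ := by
  intro S hS Q hQ
  have hS_card : S.card = n / 2 := by
    rw [hS, Fin.card_filter_val_lt]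
    omega
  have hQ_cone : (↑Q : Set (Finset (Fin n))) = cone S := by
    ext A
    simp [hQ, cone]
  refine ⟨?_, fun μ hμ => hQ_cone ▸ cQ_cone_eq_OptCost S hμ⟩
  rw [hQ, card_filter_subset_or_superset, hS_card, Fintype.card_fin, show n - n / 2 = (n + 1) / 2 by omega]
end

section
/- Let p_1 ≥ p_2 ≥ ⋯ ≥ p_n be a non-increasing list of real numbers with p_i = 2^{−a_i} for integers a_i, and let a be an integer with a ≤ a_1 (equivalently, 2^{−a} ≥ p_1). If Σ_{i=1}^n p_i ≥ 2^{−a}, then there exists an index m with Σ_{i=1}^m p_i = 2^{−a}. Moreover, if Σ_{i=1}^n p_i is an integer multiple of 2^{−a}, then there exists an index ℓ with Σ_{i=ℓ}^n p_i = 2^{−a}. -/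
lemma dyadic_key (n : ℕ) (p : ℕ → ℝ) (e : ℕ → ℤ) (a : ℤ)
    (hp : ∀ i < n, p i = (2 : ℝ) ^ (-(e i)))
    (hea : ∀ i < n, a ≤ e i)
    (hemono : ∀ i j, i ≤ j → j < n → e i ≤ e j)
    (k : ℕ)
    (hk : (k : ℝ) * (2 : ℝ) ^ (-a) ≤ ∑ i ∈ Finset.range n, p i) :
    ∃ m ≤ n, ∑ i ∈ Finset.range m, p i = (k : ℝ) * (2 : ℝ) ^ (-a) := by
  classical
  rcases Nat.eq_zero_or_pos k with rfl | hkpos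
  · exact ⟨0, Nat.zero_le n, by simp⟩
  set t : ℝ := (2:ℝ)^(-a) with ht
  have htpos : 0 < t := by positivity
  have hQ : ∃ m, (k:ℝ) * t ≤ ∑ i ∈ Finset.range m, p i := ⟨n, hk⟩
  set m := Nat.find hQ with hm
  have hspec : (k:ℝ) * t ≤ ∑ i ∈ Finset.range m, p i := Nat.find_spec hQ
  have hmn : m ≤ n := Nat.find_le hk
  have hm0 : m ≠ 0 := by
    intro h
    rw [h] at hspec; simp at hspec
    have hkt : (0:ℝ) < (k:ℝ) * t := by positivity
    linarith
  obtain ⟨m', hmm⟩ : ∃ m'', m = m'' + 1 := ⟨m - 1, by omega⟩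
  have hlt : ∑ i ∈ Finset.range m', p i < (k:ℝ) * t := by
    have := Nat.find_min hQ (show m' < m by omega)
    linarith [lt_of_not_ge this]
  have hm'n : m' < n := by omega
  set E := e m' with hE
  have hqpos : (0:ℝ) < (2:ℝ)^(-E) := by positivity
  have hterm : ∀ i, i ≤ m' → i < n →
      p i = ((2:ℤ)^((E - e i).toNat) : ℝ) * (2:ℝ)^(-E) := by
    intro i hi hin
    have h1 : (0:ℤ) ≤ E - e i := sub_nonneg.mpr (hemono i m' hi hm'n)
    rw [hp i hin]
    push_cast
    rw [← zpow_natCast (2:ℝ), Int.toNat_of_nonneg h1, ← zpow_add₀ (two_ne_zero)]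
    congr 1; ring
  obtain ⟨c, hc⟩ : ∃ c : ℤ, ∑ i ∈ Finset.range m', p i = (c:ℝ) * (2:ℝ)^(-E) := by
    refine ⟨∑ i ∈ Finset.range m', 2^((E - e i).toNat), ?_⟩
    push_cast
    rw [Finset.sum_mul]
    refine Finset.sum_congr rfl fun i hi => ?_
    have hi' := Finset.mem_range.mp hi
    have := hterm i (by omega) (by omega)
    push_cast at this
    exact this
  obtain ⟨d, hd⟩ : ∃ d : ℤ, (k:ℝ) * t = (d:ℝ) * (2:ℝ)^(-E) := by
    refine ⟨(k : ℤ) * 2^((E - a).toNat), ?_⟩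
    have h1 : (0:ℤ) ≤ E - a := sub_nonneg.mpr (hea m' hm'n)
    push_cast
    rw [ht, mul_assoc, ← zpow_natCast (2:ℝ), Int.toNat_of_nonneg h1,
      ← zpow_add₀ (two_ne_zero)]
    congr 2; ring
  have hpm' : p m' = (2:ℝ)^(-E) := by rw [hp m' hm'n]
  have hsum_succ : ∑ i ∈ Finset.range (m'+1), p i
      = ((c:ℝ) + 1) * (2:ℝ)^(-E) := by
    rw [Finset.sum_range_succ, hc, hpm']; ring
  have hcd : c < d := by
    rw [hc, hd] at hlt
    exact_mod_cast lt_of_mul_lt_mul_right hlt (le_of_lt hqpos)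
  have hdc : d ≤ c + 1 := by
    rw [hmm] at hspec
    rw [hsum_succ, hd] at hspec
    have := le_of_mul_le_mul_right hspec hqpos
    exact_mod_cast this
  have hdeq : d = c + 1 := by omega
  refine ⟨m' + 1, by omega, ?_⟩
  rw [hsum_succ, hd, hdeq]
  push_cast; ring

/-- Let `p 0 ≥ p 1 ≥ ⋯ ≥ p (n-1)` be a non-increasing list of numbers of the form
`p i = 2^{-e i}` (integer exponents), and let `a` be an integer with `a ≤ e 0`.
If `∑ p i ≥ 2^{-a}` then some prefix sums to exactly `2^{-a}`; if moreover the total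
sum is an integer multiple of `2^{-a}`, then some suffix sums to exactly `2^{-a}`. -/
theorem dyadic_prefix_suffix_sum (n : ℕ) (hn : 0 < n) (p : ℕ → ℝ) (e : ℕ → ℤ)
    (hp : ∀ i < n, p i = (2 : ℝ) ^ (-(e i)))
    (hmono : ∀ i j, i ≤ j → j < n → p j ≤ p i)
    (a : ℤ) (ha : a ≤ e 0)
    (hsum : (2 : ℝ) ^ (-a) ≤ ∑ i ∈ Finset.range n, p i) :
    (∃ m ≤ n, ∑ i ∈ Finset.range m, p i = (2 : ℝ) ^ (-a)) ∧
    ((∃ k : ℤ, ∑ i ∈ Finset.range n, p i = (k : ℝ) * (2 : ℝ) ^ (-a)) →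
      ∃ l ≤ n, ∑ i ∈ Finset.Ico l n, p i = (2 : ℝ) ^ (-a)) := by
  have hemono : ∀ i j, i ≤ j → j < n → e i ≤ e j := by
    intro i j hij hjn
    have := hmono i j hij hjn
    rw [hp i (lt_of_le_of_lt hij hjn), hp j hjn] at this
    have h2 : (-(e j) : ℤ) ≤ -(e i) := by
      exact_mod_cast (zpow_le_zpow_iff_right₀ (by norm_num : (1:ℝ) < 2)).mp this
    omega
  have hea : ∀ i < n, a ≤ e i := fun i hi =>
    le_trans ha (hemono 0 i (Nat.zero_le i) hi)
  have hk1 : (1:ℝ) * (2:ℝ)^(-a) ≤ ∑ i ∈ Finset.range n, p i := by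
    rw [one_mul]; exact hsum
  have hk1' : ((1:ℕ):ℝ) * (2:ℝ)^(-a) ≤ ∑ i ∈ Finset.range n, p i := by
    push_cast; exact hk1
  obtain ⟨m, hmn, hmeq⟩ := dyadic_key n p e a hp hea hemono 1 hk1'
  constructor
  · exact ⟨m, hmn, by rw [hmeq]; push_cast; ring⟩
  · rintro ⟨k, hkeq⟩
    have htpos : (0:ℝ) < (2:ℝ)^(-a) := by positivity
    have hk1le : (1:ℤ) ≤ k := by
      by_contra h
      push_neg at h
      have : (k:ℝ) ≤ 0 := by exact_mod_cast (by omega : k ≤ 0)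
      nlinarith
    have hk' : (((k-1).toNat : ℕ) : ℝ) * (2:ℝ)^(-a) ≤ ∑ i ∈ Finset.range n, p i := by
      have : (((k-1).toNat : ℕ) : ℝ) = (k:ℝ) - 1 := by
        exact_mod_cast Int.toNat_of_nonneg (by omega : (0:ℤ) ≤ k - 1)
      rw [this, hkeq]
      nlinarith
    obtain ⟨l, hln, hleq⟩ := dyadic_key n p e a hp hea hemono (k-1).toNat hk'
    refine ⟨l, hln, ?_⟩
    rw [Finset.sum_Ico_eq_sub _ hln, hkeq, hleq]
    have : (((k-1).toNat : ℕ) : ℝ) = (k:ℝ) - 1 := by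
      exact_mod_cast Int.toNat_of_nonneg (by omega : (0:ℤ) ≤ k - 1)
    rw [this]; ring
end
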